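/- arXiv:1504.03390 — 2 statements merged into one kernel-verified Lean document; each statement's English description precedes it below -/
import Mathlib

section
/- Let (W_t)_{t≥0} be a standard one-dimensional Brownian motion on (Ω, F, P). Fix 0 ≤ s < t and let (π_n)_{n≥1} be a sequence of partitions π_n = {s = t_{n,0} < t_{n,1} < ⋯ < t_{n,m_n} = t} of [s,t] with mesh tending to 0, with Σ_{n=1}^∞ ‖π_n‖ < ∞, and nested in the sense that π_n ⊆ π_{n+1} for all n ≥ 1. Then the total-variation sums satisfy Σ_{j=1}^{m_n} |W_{t_{n,j}} − W_{t_{n,j−1}}| → ∞ almost surely as n → ∞. In particular, almost surely the sample paths of W have infinite variation on [s,t]. -/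
/-!
The squared increments `ΔW²` over `π_n` are independent, their means add up to `t - s` and
their variances to at most `Var[Z²] · ‖π_n‖ · (t - s)` with `Z` standard normal. Since the meshes
are summable, so are the second moments of `∑ ΔW² - (t - s)`, and a Borel–Cantelli argument gives
`∑ ΔW² → t - s` almost surely. On a continuous path the increments are eventually uniformly
below any `ε > 0`, and `∑ ΔW² ≤ ε ∑ |ΔW|` then forces the variation sums to infinity.
-/

open MeasureTheory Filter Topology Set ProbabilityTheory
open scoped NNReal ENNReal

lemma integral_sq_gaussianReal (v : ℝ≥0) : ∫ x, x ^ 2 ∂gaussianReal 0 v = v := by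
  have h := variance_id_gaussianReal (μ := 0) (v := v)
  rw [variance_eq_sub (memLp_id_gaussianReal 2)] at h
  simpa [integral_id_gaussianReal] using h

lemma variance_sq_gaussianReal (v : ℝ≥0) :
    Var[fun x ↦ x ^ 2; gaussianReal 0 v] = v ^ 2 * Var[fun x ↦ x ^ 2; gaussianReal 0 1] := by
  have hmap : (gaussianReal 0 1).map (fun x ↦ √v * x) = gaussianReal 0 v := by
    rw [gaussianReal_map_const_mul]
    congr 1
    · simp
    · ext; simp
  have hsq : (fun x : ℝ ↦ x ^ 2) ∘ (fun x ↦ √v * x) = fun x ↦ (v : ℝ) * x ^ 2 := by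
    ext x; simp [mul_pow]
  rw [← hmap, variance_map (by fun_prop) (by fun_prop), hsq, variance_const_mul]

lemma memLp_sq_of_hasLaw_gaussianReal {Ω : Type*} [MeasurableSpace Ω] {P : Measure Ω}
    {X : Ω → ℝ} {v : ℝ≥0} (hX : HasLaw X (gaussianReal 0 v) P) :
    MemLp (fun ω ↦ X ω ^ 2) 2 P := by
  have h4 : MemLp X 4 P := by
    have := memLp_id_gaussianReal (μ := 0) (v := v) 4
    rw [← hX.map_eq, memLp_map_measure_iff (by fun_prop) hX.aemeasurable] at this
    simpa using this
  refine (memLp_two_iff_integrable_sq (hX.aemeasurable.pow_const 2).aestronglyMeasurable).2 ?_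
  simpa [← pow_mul, (by decide : Even 4).pow_abs] using h4.integrable_norm_pow (by norm_num)

section SumOfSquares

variable {Ω ι : Type*} [MeasurableSpace Ω] {P : Measure Ω}
  {X : ι → Ω → ℝ} {v : ι → ℝ≥0} {s : Finset ι}

lemma memLp_sum_sq_of_hasLaw_gaussianReal (hX : ∀ i ∈ s, HasLaw (X i) (gaussianReal 0 (v i)) P) :
    MemLp (fun ω ↦ ∑ i ∈ s, X i ω ^ 2) 2 P :=
  memLp_finsetSum s fun i hi ↦ memLp_sq_of_hasLaw_gaussianReal (hX i hi)

lemma integral_sum_sq_of_hasLaw_gaussianReal [IsProbabilityMeasure P]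
    (hX : ∀ i ∈ s, HasLaw (X i) (gaussianReal 0 (v i)) P) :
    ∫ ω, ∑ i ∈ s, X i ω ^ 2 ∂P = ∑ i ∈ s, (v i : ℝ) := by
  rw [integral_finsetSum s fun i hi ↦ (memLp_sq_of_hasLaw_gaussianReal (hX i hi)).integrable
    one_le_two]
  refine Finset.sum_congr rfl fun i hi ↦ ?_
  rw [← integral_sq_gaussianReal, ← (hX i hi).integral_comp (by fun_prop)]
  rfl

lemma variance_sum_sq_of_hasLaw_gaussianReal [IsProbabilityMeasure P]
    (hX : ∀ i ∈ s, HasLaw (X i) (gaussianReal 0 (v i)) P)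
    (hindep : Set.Pairwise s fun i j ↦ IndepFun (X i) (X j) P) :
    Var[fun ω ↦ ∑ i ∈ s, X i ω ^ 2; P] =
      Var[fun x ↦ x ^ 2; gaussianReal 0 1] * ∑ i ∈ s, (v i : ℝ) ^ 2 := by
  have hsum : (fun ω ↦ ∑ i ∈ s, X i ω ^ 2) = ∑ i ∈ s, fun ω ↦ X i ω ^ 2 := by
    ext ω; simp
  rw [hsum, IndepFun.variance_sum (fun i hi ↦ memLp_sq_of_hasLaw_gaussianReal (hX i hi))
    fun i hi j hj hij ↦ (hindep hi hj hij).comp (measurable_id.pow_const 2)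
      (measurable_id.pow_const 2), Finset.mul_sum]
  refine Finset.sum_congr rfl fun i hi ↦ ?_
  rw [show (fun ω ↦ X i ω ^ 2) = (fun x : ℝ ↦ x ^ 2) ∘ X i from rfl,
    ← variance_map (by fun_prop) (hX i hi).aemeasurable, (hX i hi).map_eq,
    variance_sq_gaussianReal, mul_comm]

end SumOfSquares

lemma ae_tendsto_of_summable_variance {Ω : Type*} [MeasurableSpace Ω] {P : Measure Ω}
    [IsProbabilityMeasure P] {Y : ℕ → Ω → ℝ} {a : ℝ} (hY : ∀ n, MemLp (Y n) 2 P)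
    (hmean : ∀ n, P[Y n] = a) (hvar : Summable fun n ↦ Var[Y n; P]) :
    ∀ᵐ ω ∂P, Tendsto (fun n ↦ Y n ω) atTop (𝓝 a) := by
  have hdev : ∀ n, ∫⁻ ω, ENNReal.ofReal ((Y n ω - a) ^ 2) ∂P = ENNReal.ofReal Var[Y n; P] := by
    intro n
    rw [variance_eq_integral (hY n).aemeasurable, hmean]
    exact (ofReal_integral_eq_lintegral_ofReal ((hY n).sub (memLp_const a)).integrable_sq
      (ae_of_all _ fun ω ↦ sq_nonneg _)).symm
  have hmeas : ∀ n, AEMeasurable (fun ω ↦ ENNReal.ofReal ((Y n ω - a) ^ 2)) P := fun n ↦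
    (((hY n).aemeasurable.sub_const a).pow_const 2).ennreal_ofReal
  have hfin : ∫⁻ ω, ∑' n, ENNReal.ofReal ((Y n ω - a) ^ 2) ∂P ≠ ∞ := by
    rw [lintegral_tsum hmeas, tsum_congr hdev,
      ← ENNReal.ofReal_tsum_of_nonneg (fun n ↦ variance_nonneg _ _) hvar]
    exact ENNReal.ofReal_ne_top
  filter_upwards [ae_lt_top' (AEMeasurable.tsum hmeas) hfin] with ω hω
  have hsq : Tendsto (fun n ↦ (Y n ω - a) ^ 2) atTop (𝓝 0) := by
    have := (ENNReal.tendsto_toReal ENNReal.zero_ne_top).comp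
      (ENNReal.tendsto_atTop_zero_of_tsum_ne_top hω.ne)
    simpa [Function.comp_def, ENNReal.toReal_ofReal (sq_nonneg _)] using this
  rw [tendsto_iff_norm_sub_tendsto_zero]
  simpa [Real.sqrt_sq_eq_abs] using hsq.sqrt

lemma sum_sq_le_mul_sum_abs {ι : Type*} {s : Finset ι} {x : ι → ℝ} {ε : ℝ}
    (hx : ∀ i ∈ s, |x i| ≤ ε) : ∑ i ∈ s, x i ^ 2 ≤ ε * ∑ i ∈ s, |x i| := by
  rw [Finset.mul_sum]
  refine Finset.sum_le_sum fun i hi ↦ ?_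
  rw [← sq_abs, sq]
  exact mul_le_mul_of_nonneg_right (hx i hi) (abs_nonneg _)

lemma tendsto_sum_abs_atTop_of_tendsto_sum_sq {γ ι : Type*} {l : Filter γ} {s : γ → Finset ι}
    {x : γ → ι → ℝ} {a : ℝ} (ha : 0 < a) (hsmall : ∀ ε > 0, ∀ᶠ n in l, ∀ i ∈ s n, |x n i| < ε)
    (hsq : Tendsto (fun n ↦ ∑ i ∈ s n, x n i ^ 2) l (𝓝 a)) :
    Tendsto (fun n ↦ ∑ i ∈ s n, |x n i|) l atTop := by
  refine tendsto_atTop.2 fun b ↦ ?_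
  set C := max b 1
  have hC : 0 < C := lt_max_of_lt_right one_pos
  have hε : 0 < a / (2 * C) := by positivity
  filter_upwards [hsmall _ hε, hsq.eventually (lt_mem_nhds (half_lt_self ha))] with n hn hnsq
  have : a / (2 * C) * C < a / (2 * C) * ∑ i ∈ s n, |x n i| := by
    calc a / (2 * C) * C = a / 2 := by field_simp
      _ < _ := hnsq
      _ ≤ _ := sum_sq_le_mul_sum_abs fun i hi ↦ (hn i hi).le
  exact (le_max_left b 1).trans (lt_of_mul_lt_mul_left this hε.le).le

lemma IsCompact.eventually_forall_dist_lt_of_continuousOn {α β γ ι : Type*}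
    [PseudoMetricSpace α] [PseudoMetricSpace β] {K : Set α} (hK : IsCompact K) {f : α → β}
    (hf : ContinuousOn f K) {l : Filter γ} {s : γ → Finset ι} {x y : γ → ι → α}
    (hx : ∀ n, ∀ i ∈ s n, x n i ∈ K) (hy : ∀ n, ∀ i ∈ s n, y n i ∈ K)
    (hxy : ∀ δ > 0, ∀ᶠ n in l, ∀ i ∈ s n, dist (x n i) (y n i) < δ) :
    ∀ ε > 0, ∀ᶠ n in l, ∀ i ∈ s n, dist (f (x n i)) (f (y n i)) < ε := by
  intro ε hε
  obtain ⟨δ, hδ, hfδ⟩ :=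
    Metric.uniformContinuousOn_iff.1 (hK.uniformContinuousOn_of_continuous hf) ε hε
  filter_upwards [hxy δ hδ] with n hn i hi
  exact hfδ _ (hx n i hi) _ (hy n i hi) (hn i hi)

lemma monotoneOn_Iic_of_le_succ {α : Type*} [Preorder α] {τ : ℕ → α} {k : ℕ}
    (hτ : ∀ j < k, τ j ≤ τ (j + 1)) : MonotoneOn τ (Iic k) :=
  monotoneOn_of_le_add_one ordConnected_Iic fun j _ _ hj ↦ hτ j hj

section Partition

variable {τ : ℕ → ℝ≥0} {k : ℕ}

lemma sum_range_coe_sub_succ (hτ : ∀ j < k, τ j ≤ τ (j + 1)) :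
    ∑ j ∈ Finset.range k, ((τ (j + 1) - τ j : ℝ≥0) : ℝ) = τ k - τ 0 := by
  rw [Finset.sum_congr rfl fun j hj ↦ NNReal.coe_sub (hτ j (Finset.mem_range.1 hj)),
    Finset.sum_range_sub (fun j ↦ (τ j : ℝ))]

lemma dist_succ_le_sup_range {j : ℕ} (hj : j ∈ Finset.range k) (hτ : τ j ≤ τ (j + 1)) :
    dist (τ (j + 1)) (τ j) ≤ (Finset.range k).sup fun j ↦ τ (j + 1) - τ j := by
  rw [NNReal.dist_eq, abs_of_nonneg (sub_nonneg.2 (NNReal.coe_le_coe.2 hτ)), ← NNReal.coe_sub hτ,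
    NNReal.coe_le_coe]
  exact Finset.le_sup (f := fun j ↦ τ (j + 1) - τ j) hj

end Partition

lemma pairwise_indepFun_increments {Ω T : Type*} [MeasurableSpace Ω] {P : Measure Ω}
    [Preorder T] {W : T → Ω → ℝ}
    (hindep : ∀ u r v w : T, u ≤ r → r ≤ v → v ≤ w →
      IndepFun (fun ω ↦ W w ω - W v ω) (fun ω ↦ W r ω - W u ω) P)
    {τ : ℕ → T} {k : ℕ} (hτ : MonotoneOn τ (Iic k)) :
    Set.Pairwise (Finset.range k) fun i j ↦
      IndepFun (fun ω ↦ W (τ (i + 1)) ω - W (τ i) ω) (fun ω ↦ W (τ (j + 1)) ω - W (τ j) ω) P := by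
  have hlt : ∀ i j, i < j → j < k →
      IndepFun (fun ω ↦ W (τ (i + 1)) ω - W (τ i) ω) (fun ω ↦ W (τ (j + 1)) ω - W (τ j) ω) P :=
    fun i j hij hjk ↦ (hindep _ _ _ _
      (hτ (mem_Iic.2 (by omega)) (mem_Iic.2 (by omega)) (by omega))
      (hτ (mem_Iic.2 (by omega)) (mem_Iic.2 (by omega)) hij)
      (hτ (mem_Iic.2 (by omega)) (mem_Iic.2 (by omega)) (by omega))).symm
  intro i hi j hj hij
  simp only [Finset.coe_range, mem_Iio] at hi hj
  rcases hij.lt_or_gt with h | h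
  · exact hlt i j h hj
  · exact (hlt j i h hi).symm

lemma ae_tendsto_sum_sq_increments {Ω : Type*} [MeasurableSpace Ω] {P : Measure Ω}
    [IsProbabilityMeasure P] {W : ℝ≥0 → Ω → ℝ} (hmeas : ∀ u, Measurable (W u))
    (hgauss : ∀ u v : ℝ≥0, u ≤ v →
      Measure.map (fun ω ↦ W v ω - W u ω) P = gaussianReal 0 (v - u))
    (hindep : ∀ u r v w : ℝ≥0, u ≤ r → r ≤ v → v ≤ w →
      IndepFun (fun ω ↦ W w ω - W v ω) (fun ω ↦ W r ω - W u ω) P)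
    {s t : ℝ≥0} {m : ℕ → ℕ} {τ : ℕ → ℕ → ℝ≥0} (hτ : ∀ n, ∀ j < m n, τ n j ≤ τ n (j + 1))
    (hfirst : ∀ n, τ n 0 = s) (hlast : ∀ n, τ n (m n) = t)
    (hsum : Summable fun n ↦ (Finset.range (m n)).sup fun j ↦ τ n (j + 1) - τ n j) :
    ∀ᵐ ω ∂P, Tendsto (fun n ↦ ∑ j ∈ Finset.range (m n), (W (τ n (j + 1)) ω - W (τ n j) ω) ^ 2)
      atTop (𝓝 (t - s)) := by
  have hlaw : ∀ n, ∀ j ∈ Finset.range (m n), HasLaw (fun ω ↦ W (τ n (j + 1)) ω - W (τ n j) ω)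
      (gaussianReal 0 (τ n (j + 1) - τ n j)) P := fun n j hj ↦
    ⟨((hmeas _).sub (hmeas _)).aemeasurable, hgauss _ _ (hτ n j (Finset.mem_range.1 hj))⟩
  refine ae_tendsto_of_summable_variance (fun n ↦ memLp_sum_sq_of_hasLaw_gaussianReal (hlaw n))
    (fun n ↦ ?_) ?_
  · rw [integral_sum_sq_of_hasLaw_gaussianReal (hlaw n), sum_range_coe_sub_succ (hτ n), hfirst,
      hlast]
  refine Summable.of_nonneg_of_le (fun n ↦ variance_nonneg _ _) (fun n ↦ ?_)
    ((NNReal.summable_coe.2 hsum).mul_left (Var[fun x ↦ x ^ 2; gaussianReal 0 1] * (t - s)))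
  rw [variance_sum_sq_of_hasLaw_gaussianReal (hlaw n)
    (pairwise_indepFun_increments hindep (monotoneOn_Iic_of_le_succ (hτ n))), mul_assoc]
  gcongr
  · exact variance_nonneg _ _
  set mesh := (Finset.range (m n)).sup fun j ↦ τ n (j + 1) - τ n j
  calc _ ≤ (mesh : ℝ) * ∑ j ∈ Finset.range (m n), |((τ n (j + 1) - τ n j : ℝ≥0) : ℝ)| :=
        sum_sq_le_mul_sum_abs fun j hj ↦ by
          rw [NNReal.abs_eq]
          exact_mod_cast Finset.le_sup (f := fun j ↦ τ n (j + 1) - τ n j) hj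
    _ = _ := by simp only [NNReal.abs_eq, sum_range_coe_sub_succ (hτ n), hfirst, hlast, mul_comm]

theorem brownian_infinite_variation_general
    {Ω : Type*} [MeasurableSpace Ω] (P : Measure Ω) [IsProbabilityMeasure P]
    (W : ℝ≥0 → Ω → ℝ)
    (hmeas : ∀ u, Measurable (W u))
    (hgauss : ∀ u v : ℝ≥0, u ≤ v →
      Measure.map (fun ω => W v ω - W u ω) P = ProbabilityTheory.gaussianReal 0 (v - u))
    (hindep : ∀ u r v w : ℝ≥0, u ≤ r → r ≤ v → v ≤ w →
      ProbabilityTheory.IndepFun (fun ω => W w ω - W v ω) (fun ω => W r ω - W u ω) P)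
    (hcont : ∀ᵐ ω ∂P, Continuous fun u : ℝ≥0 => W u ω)
    (s t : ℝ≥0) (hst : s < t)
    (m : ℕ → ℕ) (τ : ℕ → ℕ → ℝ≥0)
    (hfirst : ∀ n, τ n 0 = s) (hlast : ∀ n, τ n (m n) = t)
    (hmono : ∀ n, ∀ j < m n, τ n j < τ n (j + 1))
    (hsum : Summable fun n => (Finset.range (m n)).sup fun j => τ n (j + 1) - τ n j) :
    ∀ᵐ ω ∂P, Tendsto
      (fun n => ∑ j ∈ Finset.range (m n), |W (τ n (j + 1)) ω - W (τ n j) ω|)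
      atTop atTop := by
  have hτ : ∀ n, ∀ j < m n, τ n j ≤ τ n (j + 1) := fun n j hj ↦ (hmono n j hj).le
  have hτIcc : ∀ n, ∀ j ≤ m n, τ n j ∈ Icc s t := fun n j hj ↦ by
    simpa only [hfirst, hlast] using ((monotoneOn_Iic_of_le_succ (hτ n)).mono
      Icc_subset_Iic_self).mapsTo_Icc ⟨Nat.zero_le j, hj⟩
  have hfine : ∀ δ > 0, ∀ᶠ n in atTop, ∀ j ∈ Finset.range (m n),
      dist (τ n (j + 1)) (τ n j) < δ := fun δ hδ ↦ by
    have hmesh := NNReal.tendsto_coe.2 (NNReal.tendsto_atTop_zero_of_summable hsum)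
    rw [NNReal.coe_zero] at hmesh
    filter_upwards [hmesh.eventually_lt_const hδ] with n hn j hj
    exact (dist_succ_le_sup_range hj (hτ n j (Finset.mem_range.1 hj))).trans_lt hn
  filter_upwards [ae_tendsto_sum_sq_increments hmeas hgauss hindep hτ hfirst hlast hsum, hcont]
    with ω hqv hω
  refine tendsto_sum_abs_atTop_of_tendsto_sum_sq (sub_pos.2 hst) (fun ε hε ↦ ?_) hqv
  simpa only [Real.dist_eq] using isCompact_Icc.eventually_forall_dist_lt_of_continuousOn
    hω.continuousOn (fun n j hj ↦ hτIcc n (j + 1) (Finset.mem_range.1 hj))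
    (fun n j hj ↦ hτIcc n j (Finset.mem_range.1 hj).le) hfine ε hε

/-- Along a nested sequence of partitions of `[s,t]` with summable mesh tending to `0`,
the total-variation sums of Brownian motion tend to `∞` almost surely. -/
theorem brownian_infinite_variation
    {Ω : Type*} [MeasurableSpace Ω] (P : Measure Ω) [IsProbabilityMeasure P]
    (W : ℝ≥0 → Ω → ℝ)
    (hmeas : ∀ u, Measurable (W u))
    (h0 : ∀ᵐ ω ∂P, W 0 ω = 0)
    (hgauss : ∀ u v : ℝ≥0, u ≤ v →
      Measure.map (fun ω => W v ω - W u ω) P = ProbabilityTheory.gaussianReal 0 (v - u))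
    (hindep : ∀ u r v w : ℝ≥0, u ≤ r → r ≤ v → v ≤ w →
      ProbabilityTheory.IndepFun (fun ω => W w ω - W v ω) (fun ω => W r ω - W u ω) P)
    (hcont : ∀ᵐ ω ∂P, Continuous fun u : ℝ≥0 => W u ω)
    (s t : ℝ≥0) (hst : s < t)
    (m : ℕ → ℕ) (τ : ℕ → ℕ → ℝ≥0)
    (hm : ∀ n, 1 ≤ m n)
    (hfirst : ∀ n, τ n 0 = s) (hlast : ∀ n, τ n (m n) = t)
    (hmono : ∀ n, ∀ j < m n, τ n j < τ n (j + 1))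
    (hmesh : Tendsto (fun n => (Finset.range (m n)).sup fun j => τ n (j + 1) - τ n j)
      atTop (𝓝 0))
    (hsum : Summable fun n => (Finset.range (m n)).sup fun j => τ n (j + 1) - τ n j)
    (hnested : ∀ n, ∀ j ≤ m n, ∃ k ≤ m (n + 1), τ (n + 1) k = τ n j) :
    ∀ᵐ ω ∂P, Tendsto
      (fun n => ∑ j ∈ Finset.range (m n), |W (τ n (j + 1)) ω - W (τ n j) ω|)
      atTop atTop :=
  brownian_infinite_variation_general P W hmeas hgauss hindep hcont s t hst m τ hfirst hlast hmono
    hsum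
end

section
/- Let (Ω, F, (F_t)_{t≥0}, P) be a filtered probability space, fix 0 ≤ t₀ < t < ∞, and let X = (X_s) be a real-valued process, progressively measurable with respect to (F_t)_{t≥0}, such that E[∫_{t₀}^{t} |X_s|² ds] < ∞. Then there exists a sequence (X^n)_{n≥1} of adapted step processes on [t₀, t], each satisfying E[∫_{t₀}^{t} |X^n_s|² ds] < ∞, such that E[∫_{t₀}^{t} |X_s − X^n_s|² ds] → 0 as n → ∞. -/
/-!
The processes that are `L²(P ⊗ ds)`-limits of adapted step processes form a closed class. It
contains every bounded adapted process that is Lipschitz in time: sample it at the left endpoints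
of a fine uniform partition. A bounded progressive process is the limit, as `h → 0`, of its
backward moving averages `s ↦ h⁻¹ ∫_{s-h}^{s} X`, by the Lebesgue differentiation theorem and
dominated convergence; these are bounded, Lipschitz in time with constant `2M/h`, and adapted
because they only look at the past. Finally a square-integrable progressive process is the limit
of its truncations at levels `M → ∞`.
-/

open MeasureTheory Filter Topology Set
open scoped NNReal ENNReal

noncomputable def clip (M x : ℝ) : ℝ := max (-M) (min x M)

lemma clip_eq_self {M x : ℝ} (h : |x| ≤ M) : clip M x = x := by
  rw [abs_le] at h
  simp [clip, h.1, h.2]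

lemma abs_clip_le {M : ℝ} (hM : 0 ≤ M) (x : ℝ) : |clip M x| ≤ M :=
  abs_le.2 ⟨le_max_left _ _, max_le (by linarith) (min_le_right _ _)⟩

lemma sq_sub_clip_le {M : ℝ} (hM : 0 ≤ M) (x : ℝ) : (x - clip M x) ^ 2 ≤ x ^ 2 := by
  unfold clip
  rcases le_total x (-M) with h | h
  · rw [min_eq_left (by linarith), max_eq_left h]; nlinarith
  · rcases le_total x M with h' | h'
    · rw [min_eq_left h', max_eq_right h]; nlinarith
    · rw [min_eq_right h', max_eq_right (by linarith)]; nlinarith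

lemma continuous_clip (M : ℝ) : Continuous (clip M) := by
  unfold clip; fun_prop

noncomputable def backwardAverage (f : ℝ → ℝ) (h x : ℝ) : ℝ := h⁻¹ * ∫ u in (x - h)..x, f u

section BackwardAverage

variable {f : ℝ → ℝ} {M h : ℝ}

lemma abs_backwardAverage_le (hM : ∀ x, |f x| ≤ M) (hh : 0 < h) (x : ℝ) :
    |backwardAverage f h x| ≤ M := by
  have hI : |∫ u in (x - h)..x, f u| ≤ M * h := by
    simpa [abs_of_pos hh] using
      intervalIntegral.norm_integral_le_of_norm_le_const (a := x - h) (b := x)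
        fun u _ => (Real.norm_eq_abs _).trans_le (hM u)
  rw [backwardAverage, abs_mul, abs_inv, abs_of_pos hh, inv_mul_le_iff₀ hh]
  linarith

lemma abs_backwardAverage_sub_le (hf : LocallyIntegrable f) (hM : ∀ x, |f x| ≤ M) (hh : 0 < h)
    (x y : ℝ) : |backwardAverage f h x - backwardAverage f h y| ≤ 2 * M / h * |x - y| := by
  have hi : ∀ a b, IntervalIntegrable f volume a b := fun a b =>
    (hf.integrableOn_isCompact isCompact_uIcc).intervalIntegrable
  have hbound : ∀ a b, |∫ u in a..b, f u| ≤ M * |b - a| := fun a b =>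
    (Real.norm_eq_abs _).symm.trans_le <| intervalIntegral.norm_integral_le_of_norm_le_const
      fun u _ => (Real.norm_eq_abs _).trans_le (hM u)
  have hdiff : (∫ u in (x - h)..x, f u) - ∫ u in (y - h)..y, f u =
      (∫ u in (x - h)..(y - h), f u) - ∫ u in x..y, f u :=
    intervalIntegral.integral_interval_sub_interval_comm (hi _ _) (hi _ _) (hi _ _)
  have h1 := hbound (x - h) (y - h)
  have h2 := hbound x y
  rw [show y - h - (x - h) = -(x - y) by ring, abs_neg] at h1
  rw [abs_sub_comm] at h2
  rw [backwardAverage, backwardAverage, ← mul_sub, hdiff, abs_mul, abs_inv, abs_of_pos hh,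
    div_mul_eq_mul_div, le_div_iff₀ hh, mul_comm, ← mul_assoc, mul_inv_cancel₀ hh.ne', one_mul]
  linarith [abs_sub ((∫ u in (x - h)..(y - h), f u)) (∫ u in x..y, f u)]

lemma backwardAverage_eq_average_closedBall (hh : 0 < h) (x : ℝ) :
    backwardAverage f h x = ⨍ u in Metric.closedBall (x - h / 2) (h / 2), f u := by
  have hball : Metric.closedBall (x - h / 2) (h / 2) = Icc (x - h) x := by
    rw [Real.closedBall_eq_Icc]; congr 1 <;> ring
  rw [hball, setAverage_eq, measureReal_def, Real.volume_Icc, sub_sub_cancel,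
    ENNReal.toReal_ofReal hh.le, integral_Icc_eq_integral_Ioc,
    ← intervalIntegral.integral_of_le (by linarith), backwardAverage, smul_eq_mul]

lemma ae_tendsto_backwardAverage (hf : LocallyIntegrable f) :
    ∀ᵐ x, Tendsto (fun h => backwardAverage f h x) (𝓝[>] 0) (𝓝 (f x)) := by
  filter_upwards [IsUnifLocDoublingMeasure.ae_tendsto_average (μ := volume) hf 1] with x hx
  have hhalf : Tendsto (fun h : ℝ => h / 2) (𝓝[>] 0) (𝓝[>] 0) :=
    tendsto_nhdsWithin_of_tendsto_nhds_of_eventually_within _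
      (by simpa using ((tendsto_id (x := 𝓝 (0 : ℝ))).div_const 2).mono_left nhdsWithin_le_nhds)
      (eventually_nhdsWithin_of_forall fun h (hh : 0 < h) => half_pos hh)
  refine (hx (fun h => x - h / 2) (fun h => h / 2) hhalf
    (eventually_nhdsWithin_of_forall fun h (hh : 0 < h) => ?_)).congr' ?_
  · rw [Metric.mem_closedBall, Real.dist_eq, sub_sub_cancel, one_mul, abs_of_pos (half_pos hh)]
  · filter_upwards [self_mem_nhdsWithin] with h hh
    exact (backwardAverage_eq_average_closedBall hh x).symm

lemma backwardAverage_congr {g : ℝ → ℝ} {x : ℝ} (hfg : EqOn f g (Icc (x - h) x))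
    (hh : 0 < h) : backwardAverage f h x = backwardAverage g h x := by
  rw [backwardAverage, backwardAverage,
    intervalIntegral.integral_congr (by rwa [uIcc_of_le (by linarith)])]

end BackwardAverage

lemma measurable_backwardAverage_apply {Ω : Type*} {mΩ : MeasurableSpace Ω} {g : ℝ → Ω → ℝ}
    (hg : Measurable fun p : ℝ × Ω => g p.1 p.2) {h : ℝ} (hh : 0 < h) (x : ℝ) :
    Measurable fun ω => backwardAverage (g · ω) h x := by
  simp_rw [backwardAverage, intervalIntegral.integral_of_le (by linarith : x - h ≤ x)]
  exact (hg.stronglyMeasurable.integral_prod_left' (μ := volume.restrict _)).measurable.const_mul _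

lemma measurable_backwardAverage_prod {Ω : Type*} [MeasurableSpace Ω] {X : ℝ → Ω → ℝ}
    (hX : Measurable fun p : Ω × ℝ => X p.2 p.1) {h : ℝ} (hh : 0 < h) :
    Measurable fun p : Ω × ℝ => backwardAverage (X · p.1) h p.2 := by
  have hshift : ∀ (f : ℝ → ℝ) (x : ℝ), backwardAverage f h x =
      h⁻¹ * ∫ v in Ioc (-h) 0, f (v + x) := fun f x => by
    rw [backwardAverage, ← intervalIntegral.integral_of_le (by linarith),
      intervalIntegral.integral_comp_add_right, neg_add_eq_sub, zero_add]
  simp_rw [hshift]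
  have hX' : Measurable fun q : (Ω × ℝ) × ℝ => X (q.2 + q.1.2) q.1.1 :=
    hX.comp ((measurable_fst.comp measurable_fst).prodMk
      (measurable_snd.add (measurable_snd.comp measurable_fst)))
  refine Measurable.const_mul ?_ _
  exact (hX'.stronglyMeasurable.integral_prod_right' (ν := volume.restrict _)).measurable

-- Progressive measurability on the time set `[0, ∞)`; Mathlib's `IsProgressive` asks for
-- measurability on `Iic u × Ω` for every real `u`.
def IsProgressiveNonneg {Ω : Type*} {m : MeasurableSpace Ω} (F : Filtration ℝ m) (X : ℝ → Ω → ℝ) :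
    Prop :=
  ∀ u : ℝ, 0 ≤ u →
    Measurable[(inferInstance : MeasurableSpace (Set.Icc (0:ℝ) u)).prod (F u)]
      (fun p : Set.Icc (0:ℝ) u × Ω => X (↑p.1) p.2)

namespace IsProgressiveNonneg

variable {Ω : Type*} {m : MeasurableSpace Ω} {F : Filtration ℝ m} {X : ℝ → Ω → ℝ}

lemma measurable_comp_projIcc (hX : IsProgressiveNonneg F X) {u : ℝ} (hu : 0 ≤ u) :
    Measurable[(inferInstance : MeasurableSpace ℝ).prod (F u)]
      fun p : ℝ × Ω => X (projIcc 0 u hu p.1) p.2 :=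
  (hX u hu).comp
    (((continuous_projIcc (h := hu)).measurable.comp measurable_fst).prodMk measurable_snd)

lemma measurable_uncurry (hX : IsProgressiveNonneg F X) {t₀ t : ℝ} (ht₀ : 0 ≤ t₀) (htt : t₀ ≤ t)
    (hX0 : ∀ s ∉ Ioc t₀ t, ∀ ω, X s ω = 0) : Measurable fun p : Ω × ℝ => X p.2 p.1 := by
  have ht : 0 ≤ t := ht₀.trans htt
  have hstop : (fun p : Ω × ℝ => X p.2 p.1) =
      (Prod.snd ⁻¹' Icc 0 t).indicator fun p => X (projIcc 0 t ht p.2) p.1 := by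
    ext ⟨ω, s⟩
    by_cases hs : s ∈ Icc 0 t
    · simp [hs, projIcc_of_mem ht hs]
    · simp [hs, hX0 s (fun h => hs ⟨ht₀.trans h.1.le, h.2⟩) ω]
  rw [hstop]
  exact (((hX.measurable_comp_projIcc ht).mono (sup_le_sup le_rfl
    (MeasurableSpace.comap_mono (F.le t))) le_rfl).comp measurable_swap).indicator
    (measurableSet_Icc.preimage measurable_snd)

lemma comp (hX : IsProgressiveNonneg F X) {φ : ℝ → ℝ} (hφ : Measurable φ) :
    IsProgressiveNonneg F fun s ω => φ (X s ω) :=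
  fun u hu => hφ.comp (hX u hu)

lemma indicator (hX : IsProgressiveNonneg F X) {S : Set ℝ} (hS : MeasurableSet S) :
    IsProgressiveNonneg F fun s ω => S.indicator (X · ω) s :=
  fun u hu => (hX u hu).indicator (hS.preimage (measurable_subtype_coe.comp measurable_fst))

lemma measurable_backwardAverage (hX : IsProgressiveNonneg F X) (hX0 : ∀ s ≤ 0, ∀ ω, X s ω = 0)
    {u h : ℝ} (hu : 0 ≤ u) (hh : 0 < h) :
    Measurable[F u] fun ω => backwardAverage (X · ω) h u := by
  have hstop : ∀ ω, EqOn (X · ω) (fun s => X (projIcc 0 u hu s) ω) (Icc (u - h) u) := by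
    intro ω s hs
    change X s ω = X (projIcc 0 u hu s) ω
    rcases le_total 0 s with hs0 | hs0
    · rw [projIcc_of_mem hu ⟨hs0, hs.2⟩]
    · rw [hX0 s hs0, projIcc_of_le_left hu hs0, hX0 0 le_rfl]
  simp_rw [backwardAverage_congr (hstop _) hh]
  exact measurable_backwardAverage_apply (hX.measurable_comp_projIcc hu) hh u

end IsProgressiveNonneg

lemma tendsto_lintegral_lintegral_of_dominated {α β ι : Type*} [MeasurableSpace α]
    [MeasurableSpace β] {μ : Measure α} {ν : Measure β} [SFinite ν] {l : Filter ι}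
    [l.IsCountablyGenerated] {G : ι → α → β → ℝ≥0∞} {g : α → β → ℝ≥0∞}
    (hG : ∀ᶠ i in l, Measurable (Function.uncurry (G i))) (hg : Measurable (Function.uncurry g))
    (hGg : ∀ᶠ i in l, ∀ a b, G i a b ≤ g a b) (hfin : ∫⁻ a, ∫⁻ b, g a b ∂ν ∂μ ≠ ⊤)
    (hlim : ∀ a, ∀ᵐ b ∂ν, Tendsto (fun i => G i a b) l (𝓝 0)) :
    Tendsto (fun i => ∫⁻ a, ∫⁻ b, G i a b ∂ν ∂μ) l (𝓝 0) := by
  have hinner : ∀ᵐ a ∂μ, Tendsto (fun i => ∫⁻ b, G i a b ∂ν) l (𝓝 0) := by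
    filter_upwards [ae_lt_top hg.lintegral_prod_right' hfin] with a ha
    simpa using tendsto_lintegral_filter_of_dominated_convergence (g a)
      (hG.mono fun i hi => hi.comp measurable_prodMk_left)
      (hGg.mono fun i hi => ae_of_all _ (hi a)) ha.ne (hlim a)
  simpa using tendsto_lintegral_filter_of_dominated_convergence (fun a => ∫⁻ b, g a b ∂ν)
    (hG.mono fun i hi => hi.lintegral_prod_right')
    (hGg.mono fun i hi => ae_of_all _ fun a => lintegral_mono (hi a)) hfin hinner

noncomputable def sqErr {Ω : Type*} {m : MeasurableSpace Ω} (P : Measure Ω) (t₀ t : ℝ)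
    (X Y : ℝ → Ω → ℝ) : ℝ≥0∞ :=
  ∫⁻ ω, (∫⁻ s in Ioc t₀ t, ENNReal.ofReal ((X s ω - Y s ω) ^ 2)) ∂P

section SqErr

variable {Ω : Type*} {m : MeasurableSpace Ω} {P : Measure Ω} {t₀ t : ℝ} {X Y : ℝ → Ω → ℝ}

lemma sqErr_zero_right :
    sqErr P t₀ t X 0 = ∫⁻ ω, (∫⁻ s in Ioc t₀ t, ENNReal.ofReal ((X s ω) ^ 2)) ∂P := by
  simp [sqErr]

lemma sqErr_congr_left {X' : ℝ → Ω → ℝ} (hX : ∀ s ∈ Ioc t₀ t, ∀ ω, X s ω = X' s ω) :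
    sqErr P t₀ t X Y = sqErr P t₀ t X' Y :=
  lintegral_congr fun ω => setLIntegral_congr_fun measurableSet_Ioc fun s hs => by
    rw [hX s hs]

lemma sqErr_le_of_abs_le [IsFiniteMeasure P] {C : ℝ}
    (hC : ∀ s ∈ Ioo t₀ t, ∀ ω, |X s ω - Y s ω| ≤ C) :
    sqErr P t₀ t X Y ≤ ENNReal.ofReal (C ^ 2 * (t - t₀)) * P univ := by
  have hinner : ∀ ω, ∫⁻ s in Ioc t₀ t, ENNReal.ofReal ((X s ω - Y s ω) ^ 2) ≤
      ENNReal.ofReal (C ^ 2 * (t - t₀)) := fun ω => calc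
    _ = ∫⁻ s in Ioo t₀ t, ENNReal.ofReal ((X s ω - Y s ω) ^ 2) :=
      (setLIntegral_congr Ioo_ae_eq_Ioc).symm
    _ ≤ ∫⁻ _ in Ioo t₀ t, ENNReal.ofReal (C ^ 2) :=
      setLIntegral_mono measurable_const fun s hs => ENNReal.ofReal_le_ofReal <| by
        simpa only [sq_abs] using pow_le_pow_left₀ (abs_nonneg _) (hC s hs ω) 2
    _ = ENNReal.ofReal (C ^ 2 * (t - t₀)) := by
      rw [setLIntegral_const, Real.volume_Ioo, ← ENNReal.ofReal_mul (sq_nonneg C)]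
  calc sqErr P t₀ t X Y ≤ ∫⁻ _, ENNReal.ofReal (C ^ 2 * (t - t₀)) ∂P := lintegral_mono hinner
    _ = _ := lintegral_const _

lemma sqErr_le_two_mul {A B C : ℝ → Ω → ℝ}
    (hAB : Measurable fun p : Ω × ℝ => A p.2 p.1 - B p.2 p.1) :
    sqErr P t₀ t A C ≤ 2 * (sqErr P t₀ t A B + sqErr P t₀ t B C) := by
  have hsq : ∀ a b c : ℝ, ENNReal.ofReal ((a - c) ^ 2) ≤
      2 * (ENNReal.ofReal ((a - b) ^ 2) + ENNReal.ofReal ((b - c) ^ 2)) := fun a b c => by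
    rw [← ENNReal.ofReal_add (by positivity) (by positivity), ← ENNReal.ofReal_ofNat 2,
      ← ENNReal.ofReal_mul (by norm_num)]
    exact ENNReal.ofReal_le_ofReal (by nlinarith [sq_nonneg (a - 2 * b + c)])
  have hsqAB : Measurable fun p : Ω × ℝ => ENNReal.ofReal ((A p.2 p.1 - B p.2 p.1) ^ 2) :=
    (hAB.pow_const 2).ennreal_ofReal
  have hAB_sec : ∀ ω, Measurable fun s => ENNReal.ofReal ((A s ω - B s ω) ^ 2) := fun ω =>
    hsqAB.comp measurable_prodMk_left
  have hAB_int : Measurable fun ω =>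
      ∫⁻ s in Ioc t₀ t, ENNReal.ofReal ((A s ω - B s ω) ^ 2) := hsqAB.lintegral_prod_right'
  have hinner : ∀ ω, ∫⁻ s in Ioc t₀ t, ENNReal.ofReal ((A s ω - C s ω) ^ 2) ≤
      2 * ((∫⁻ s in Ioc t₀ t, ENNReal.ofReal ((A s ω - B s ω) ^ 2)) +
        ∫⁻ s in Ioc t₀ t, ENNReal.ofReal ((B s ω - C s ω) ^ 2)) := fun ω => by
    rw [← lintegral_add_left (hAB_sec ω), ← lintegral_const_mul' _ _ (by simp)]
    exact lintegral_mono fun s => hsq _ _ _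
  calc sqErr P t₀ t A C
      ≤ ∫⁻ ω, 2 * ((∫⁻ s in Ioc t₀ t, ENNReal.ofReal ((A s ω - B s ω) ^ 2)) +
          ∫⁻ s in Ioc t₀ t, ENNReal.ofReal ((B s ω - C s ω) ^ 2)) ∂P := lintegral_mono hinner
    _ = _ := by rw [lintegral_const_mul' _ _ (by simp), lintegral_add_left hAB_int]; rfl

end SqErr

def IsAdaptedStepProcess {Ω : Type*} {m : MeasurableSpace Ω} (F : Filtration ℝ m) (t₀ t : ℝ)
    (Y : ℝ → Ω → ℝ) : Prop :=
  ∃ (k : ℕ) (pt : ℕ → ℝ) (e : ℕ → Ω → ℝ),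
    0 < k ∧ pt 0 = t₀ ∧ pt k = t ∧ (∀ i < k, pt i < pt (i + 1)) ∧
    (∀ i < k, Measurable[F (pt i)] (e i)) ∧
    (∀ s ω, Y s ω = ∑ i ∈ Finset.range k, (Ico (pt i) (pt (i + 1))).indicator (fun _ => e i ω) s)

lemma sum_indicator_Ico_eq_of_mem {a : ℕ → ℝ} (ha : Monotone a) (c : ℕ → ℝ) {k j : ℕ}
    (hj : j < k) {s : ℝ} (hs : s ∈ Ico (a j) (a (j + 1))) :
    ∑ i ∈ Finset.range k, (Ico (a i) (a (i + 1))).indicator (fun _ => c i) s = c j := by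
  rw [Finset.sum_eq_single_of_mem j (Finset.mem_range.2 hj), indicator_of_mem hs]
  intro i _ hij
  exact indicator_of_notMem (fun hi => (ha.pairwise_disjoint_on_Ico_succ hij).ne_of_mem hi hs rfl) _

noncomputable def uniformGrid (t₀ t : ℝ) (k i : ℕ) : ℝ := t₀ + i * ((t - t₀) / k)

section UniformGrid

variable {t₀ t : ℝ} {k : ℕ}

@[simp]
lemma uniformGrid_zero : uniformGrid t₀ t k 0 = t₀ := by simp [uniformGrid]

lemma self_le_uniformGrid (htt : t₀ ≤ t) (i : ℕ) : t₀ ≤ uniformGrid t₀ t k i :=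
  le_add_of_nonneg_right (mul_nonneg i.cast_nonneg (div_nonneg (sub_nonneg.2 htt) k.cast_nonneg))

lemma uniformGrid_self (hk : k ≠ 0) : uniformGrid t₀ t k k = t := by
  rw [uniformGrid, mul_div_cancel₀ _ (Nat.cast_ne_zero.2 hk : (k : ℝ) ≠ 0), add_sub_cancel]

lemma uniformGrid_succ (i : ℕ) :
    uniformGrid t₀ t k (i + 1) = uniformGrid t₀ t k i + (t - t₀) / k := by
  simp only [uniformGrid]; push_cast; ring

lemma uniformGrid_strictMono (htt : t₀ < t) (hk : 0 < k) : StrictMono (uniformGrid t₀ t k) :=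
  strictMono_nat_of_lt_succ fun i => by
    rw [uniformGrid_succ]
    exact lt_add_of_pos_right _ (div_pos (sub_pos.2 htt) (Nat.cast_pos.2 hk))

lemma exists_mem_Ico_uniformGrid (hk : 0 < k) {s : ℝ} (hs : s ∈ Ico t₀ t) :
    ∃ i < k, s ∈ Ico (uniformGrid t₀ t k i) (uniformGrid t₀ t k (i + 1)) := by
  have := Ico_subset_biUnion_Ico k (uniformGrid t₀ t k)
  rw [uniformGrid_zero, uniformGrid_self hk.ne'] at this
  obtain ⟨i, hi, hs'⟩ := mem_iUnion₂.1 (this hs)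
  exact ⟨i, Finset.mem_range.1 hi, hs'⟩

end UniformGrid

noncomputable def leftSample {Ω : Type*} (X : ℝ → Ω → ℝ) (t₀ t : ℝ) (k : ℕ) : ℝ → Ω → ℝ :=
  fun s ω => ∑ i ∈ Finset.range k,
    (Ico (uniformGrid t₀ t k i) (uniformGrid t₀ t k (i + 1))).indicator
      (fun _ => X (uniformGrid t₀ t k i) ω) s

section LeftSample

variable {Ω : Type*} {X : ℝ → Ω → ℝ} {t₀ t : ℝ} {k : ℕ}

lemma isAdaptedStepProcess_leftSample {m : MeasurableSpace Ω} {F : Filtration ℝ m}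
    (htt : t₀ < t) (hk : 0 < k)
    (hX : ∀ i < k, Measurable[F (uniformGrid t₀ t k i)] (X (uniformGrid t₀ t k i))) :
    IsAdaptedStepProcess F t₀ t (leftSample X t₀ t k) :=
  ⟨k, uniformGrid t₀ t k, fun i => X (uniformGrid t₀ t k i), hk, uniformGrid_zero,
    uniformGrid_self hk.ne', fun i _ => uniformGrid_strictMono htt hk (Nat.lt_succ_self i), hX,
    fun _ _ => rfl⟩

lemma exists_leftSample_eq (htt : t₀ < t) (hk : 0 < k) {s : ℝ} (hs : s ∈ Ico t₀ t) :
    ∃ u ∈ Icc (s - (t - t₀) / k) s, ∀ ω, leftSample X t₀ t k s ω = X u ω := by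
  obtain ⟨i, hik, hi⟩ := exists_mem_Ico_uniformGrid hk hs
  refine ⟨uniformGrid t₀ t k i, ⟨?_, hi.1⟩, fun ω =>
    sum_indicator_Ico_eq_of_mem (uniformGrid_strictMono htt hk).monotone _ hik hi⟩
  linarith [hi.2, uniformGrid_succ (t₀ := t₀) (t := t) (k := k) i]

lemma abs_leftSample_le {M : ℝ} (hM : ∀ s ω, |X s ω| ≤ M) (htt : t₀ < t) (hk : 0 < k) :
    ∀ s ∈ Ico t₀ t, ∀ ω, |leftSample X t₀ t k s ω| ≤ M := fun s hs ω => by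
  obtain ⟨u, -, hu⟩ := exists_leftSample_eq (X := X) htt hk hs
  rw [hu]
  exact hM u ω

lemma abs_sub_leftSample_le {L : ℝ} (hL : ∀ s s' ω, |X s ω - X s' ω| ≤ L * |s - s'|)
    (htt : t₀ < t) (hk : 0 < k) :
    ∀ s ∈ Ioo t₀ t, ∀ ω, |X s ω - leftSample X t₀ t k s ω| ≤ L * ((t - t₀) / k) :=
  fun s hs ω => by
  obtain ⟨u, hu, hXu⟩ := exists_leftSample_eq (X := X) htt hk (Ioo_subset_Ico_self hs)
  have hL0 : 0 ≤ L := by simpa using (abs_nonneg _).trans (hL (s + 1) s ω)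
  rw [hXu]
  refine (hL s u ω).trans (mul_le_mul_of_nonneg_left ?_ hL0)
  rw [abs_of_nonneg (by linarith [hu.2])]
  linarith [hu.1]

end LeftSample

section Approximation

variable {Ω : Type*} {m : MeasurableSpace Ω} {P : Measure Ω} {t₀ t : ℝ} {X : ℝ → Ω → ℝ}

lemma tendsto_sqErr_clip (hX : Measurable fun p : Ω × ℝ => X p.2 p.1)
    (hfin : sqErr P t₀ t X 0 ≠ ⊤) :
    Tendsto (fun M => sqErr P t₀ t X fun s ω => clip M (X s ω)) atTop (𝓝 0) := by
  rw [sqErr_zero_right] at hfin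
  refine tendsto_lintegral_lintegral_of_dominated (g := fun ω s => ENNReal.ofReal ((X s ω) ^ 2))
    (Eventually.of_forall fun M => ?_) (hX.pow_const 2).ennreal_ofReal ?_ hfin fun ω => ?_
  · exact ((hX.sub ((continuous_clip M).measurable.comp hX)).pow_const 2).ennreal_ofReal
  · filter_upwards [eventually_ge_atTop 0] with M hM ω s
    exact ENNReal.ofReal_le_ofReal (sq_sub_clip_le hM _)
  · refine ae_of_all _ fun s => tendsto_const_nhds.congr' ?_
    filter_upwards [eventually_ge_atTop |X s ω|] with M hM
    simp [clip_eq_self hM]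

lemma tendsto_sqErr_backwardAverage [IsFiniteMeasure P] {M : ℝ}
    (hX : Measurable fun p : Ω × ℝ => X p.2 p.1) (hM : ∀ s ω, |X s ω| ≤ M)
    (hint : ∀ ω, Integrable (X · ω)) :
    Tendsto (fun h => sqErr P t₀ t X fun s ω => backwardAverage (X · ω) h s) (𝓝[>] 0) (𝓝 0) := by
  refine tendsto_lintegral_lintegral_of_dominated
    (g := fun _ _ => ENNReal.ofReal ((2 * M) ^ 2)) ?_ measurable_const ?_ ?_ fun ω => ?_
  · filter_upwards [self_mem_nhdsWithin] with h hh
    exact ((hX.sub (measurable_backwardAverage_prod hX hh)).pow_const 2).ennreal_ofReal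
  · filter_upwards [self_mem_nhdsWithin] with h hh ω s
    have ha := abs_le.1 (hM s ω)
    have hb := abs_le.1 (abs_backwardAverage_le (hM · ω) hh s)
    exact ENNReal.ofReal_le_ofReal (by nlinarith)
  · simp [lintegral_const, ENNReal.mul_eq_top]
  · filter_upwards [ae_restrict_of_ae (ae_tendsto_backwardAverage (hint ω).locallyIntegrable)]
      with s hs
    have hcont : Continuous fun a => ENNReal.ofReal ((X s ω - a) ^ 2) :=
      ENNReal.continuous_ofReal.comp (by fun_prop)
    simpa [Function.comp_def] using (hcont.tendsto _).comp hs

lemma tendsto_sqErr_leftSample [IsFiniteMeasure P] {L : ℝ}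
    (hL : ∀ s s' ω, |X s ω - X s' ω| ≤ L * |s - s'|) (htt : t₀ < t) :
    Tendsto (fun k => sqErr P t₀ t X (leftSample X t₀ t k)) atTop (𝓝 0) := by
  have hbound : Tendsto (fun k : ℕ => ENNReal.ofReal ((L * ((t - t₀) / k)) ^ 2 * (t - t₀)) * P univ)
      atTop (𝓝 0) := by
    have hmesh := tendsto_const_div_atTop_nhds_zero_nat (t - t₀)
    have hcont : Continuous fun δ : ℝ => ENNReal.ofReal ((L * δ) ^ 2 * (t - t₀)) :=
      ENNReal.continuous_ofReal.comp (by fun_prop)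
    simpa using ENNReal.Tendsto.mul_const ((hcont.tendsto 0).comp hmesh)
      (Or.inr (measure_ne_top P univ))
  refine tendsto_of_tendsto_of_tendsto_of_le_of_le' tendsto_const_nhds hbound
    (Eventually.of_forall fun _ => zero_le) ?_
  filter_upwards [eventually_gt_atTop 0] with k hk
  exact sqErr_le_of_abs_le (abs_sub_leftSample_le hL htt hk)

end Approximation

def IsApproxByAdaptedSteps {Ω : Type*} {m : MeasurableSpace Ω} (P : Measure Ω)
    (F : Filtration ℝ m) (t₀ t : ℝ) (X : ℝ → Ω → ℝ) : Prop :=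
  ∀ ε > 0, ∃ Y, IsAdaptedStepProcess F t₀ t Y ∧ sqErr P t₀ t Y 0 < ⊤ ∧ sqErr P t₀ t X Y < ε

section IsApproxByAdaptedSteps

variable {Ω : Type*} {m : MeasurableSpace Ω} {P : Measure Ω} {F : Filtration ℝ m} {t₀ t : ℝ}
  {X : ℝ → Ω → ℝ}

lemma IsApproxByAdaptedSteps.congr {X' : ℝ → Ω → ℝ} (hX' : IsApproxByAdaptedSteps P F t₀ t X')
    (h : ∀ s ∈ Ioc t₀ t, ∀ ω, X s ω = X' s ω) : IsApproxByAdaptedSteps P F t₀ t X :=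
  fun ε hε => (hX' ε hε).imp fun _ hY => ⟨hY.1, hY.2.1, sqErr_congr_left h ▸ hY.2.2⟩

lemma IsApproxByAdaptedSteps.of_forall_sqErr_lt (hX : Measurable fun p : Ω × ℝ => X p.2 p.1)
    (h : ∀ η > 0, ∃ X' : ℝ → Ω → ℝ, (Measurable fun p : Ω × ℝ => X' p.2 p.1) ∧
      sqErr P t₀ t X X' < η ∧ IsApproxByAdaptedSteps P F t₀ t X') :
    IsApproxByAdaptedSteps P F t₀ t X := by
  intro ε hε
  have hε4 : 0 < ε / 4 := ENNReal.div_pos hε.ne' (by norm_num)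
  obtain ⟨X', hX', hXX', hX'_approx⟩ := h _ hε4
  obtain ⟨Y, hY, hY_fin, hX'Y⟩ := hX'_approx _ hε4
  refine ⟨Y, hY, hY_fin, (sqErr_le_two_mul (hX.sub hX')).trans_lt ?_⟩
  calc 2 * (sqErr P t₀ t X X' + sqErr P t₀ t X' Y) < 2 * (ε / 4 + ε / 4) :=
        ENNReal.mul_lt_mul_right (by norm_num) (by norm_num) (ENNReal.add_lt_add hXX' hX'Y)
    _ = ε := by
      rw [show (2 : ℝ≥0∞) * (ε / 4 + ε / 4) = 4 * (ε / 4) by ring]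
      exact ENNReal.mul_div_cancel (by norm_num) (by norm_num)

lemma isApproxByAdaptedSteps_of_lipschitz [IsFiniteMeasure P] {L M : ℝ} (htt : t₀ < t)
    (hL : ∀ s s' ω, |X s ω - X s' ω| ≤ L * |s - s'|) (hM : ∀ s ω, |X s ω| ≤ M)
    (hadapt : ∀ u, t₀ ≤ u → Measurable[F u] (X u)) : IsApproxByAdaptedSteps P F t₀ t X := by
  intro ε hε
  obtain ⟨k, hk_err, hk⟩ := ((tendsto_sqErr_leftSample (P := P) hL htt).eventually_lt_const hε
    |>.and (eventually_gt_atTop 0)).exists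
  refine ⟨leftSample X t₀ t k, isAdaptedStepProcess_leftSample htt hk fun i _ =>
    hadapt _ (self_le_uniformGrid htt.le i), ?_, hk_err⟩
  refine (sqErr_le_of_abs_le (C := M) fun s hs ω => ?_).trans_lt
    (ENNReal.mul_lt_top ENNReal.ofReal_lt_top (measure_lt_top P univ))
  simpa using abs_leftSample_le hM htt hk s (Ioo_subset_Ico_self hs) ω

lemma IsProgressiveNonneg.isApproxByAdaptedSteps_of_abs_le [IsFiniteMeasure P] {M : ℝ}
    (hX : IsProgressiveNonneg F X) (ht₀ : 0 ≤ t₀) (htt : t₀ < t) (hM : ∀ s ω, |X s ω| ≤ M)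
    (hX0 : ∀ s ∉ Ioc t₀ t, ∀ ω, X s ω = 0) : IsApproxByAdaptedSteps P F t₀ t X := by
  have hXm := hX.measurable_uncurry ht₀ htt.le hX0
  have hint : ∀ ω, Integrable (X · ω) := fun ω =>
    (integrableOn_iff_integrable_of_support_subset fun s hs => by_contra fun h => hs (hX0 s h ω)).1
      <| Measure.integrableOn_of_bounded (by simp)
        (hXm.comp measurable_prodMk_left).aestronglyMeasurable
        (ae_of_all _ fun s => (Real.norm_eq_abs _).trans_le (hM s ω))
  refine .of_forall_sqErr_lt hXm fun η hη => ?_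
  obtain ⟨h, hh_err, hh⟩ := ((tendsto_sqErr_backwardAverage (P := P) (t₀ := t₀) (t := t) hXm hM
    hint).eventually_lt_const hη |>.and self_mem_nhdsWithin).exists
  refine ⟨_, measurable_backwardAverage_prod hXm hh, hh_err, isApproxByAdaptedSteps_of_lipschitz htt
    (fun s s' ω => abs_backwardAverage_sub_le (hint ω).locallyIntegrable (hM · ω) hh s s')
    (fun s ω => abs_backwardAverage_le (hM · ω) hh s) fun u hu => ?_⟩
  exact hX.measurable_backwardAverage
    (fun s hs ω => hX0 s (fun h' => not_lt.2 (hs.trans ht₀) h'.1) ω) (ht₀.trans hu) hh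

lemma IsProgressiveNonneg.isApproxByAdaptedSteps [IsFiniteMeasure P]
    (hX : IsProgressiveNonneg F X) (ht₀ : 0 ≤ t₀) (htt : t₀ < t) (hfin : sqErr P t₀ t X 0 ≠ ⊤) :
    IsApproxByAdaptedSteps P F t₀ t X := by
  set Xt : ℝ → Ω → ℝ := fun s ω => (Ioc t₀ t).indicator (X · ω) s
  have hXXt : ∀ s ∈ Ioc t₀ t, ∀ ω, X s ω = Xt s ω := fun s hs ω => by simp [Xt, hs]
  have hXt0 : ∀ s ∉ Ioc t₀ t, ∀ ω, Xt s ω = 0 := fun s hs ω => indicator_of_notMem hs _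
  have hXt_prog := hX.indicator (measurableSet_Ioc (a := t₀) (b := t))
  have hXt := hXt_prog.measurable_uncurry ht₀ htt.le hXt0
  refine IsApproxByAdaptedSteps.congr (.of_forall_sqErr_lt hXt fun η hη => ?_) hXXt
  obtain ⟨M, hM_err, hM⟩ := ((tendsto_sqErr_clip hXt (by rwa [← sqErr_congr_left hXXt]))
    |>.eventually_lt_const hη |>.and (eventually_ge_atTop 0)).exists
  refine ⟨_, (continuous_clip M).measurable.comp hXt, hM_err, ?_⟩
  exact (hXt_prog.comp (continuous_clip M).measurable).isApproxByAdaptedSteps_of_abs_le ht₀ htt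
    (fun s ω => abs_clip_le hM _) fun s hs ω =>
      (congrArg (clip M) (hXt0 s hs ω)).trans (clip_eq_self (by simpa))

end IsApproxByAdaptedSteps

/-- Approximation by adapted step processes in `L²(Ω × [t₀,t])`: if
`E ∫_{t₀}^{t} |X_s|² ds < ∞`, there are adapted step processes `Xⁿ`, each with
`E ∫_{t₀}^{t} |Xⁿ_s|² ds < ∞`, such that `E ∫_{t₀}^{t} |X_s − Xⁿ_s|² ds → 0`. -/
theorem approx_by_adapted_step_processes_L2
    {Ω : Type*} {m : MeasurableSpace Ω} {P : Measure Ω} [IsProbabilityMeasure P]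
    (F : Filtration ℝ m) (t₀ t : ℝ) (ht₀ : 0 ≤ t₀) (htt : t₀ < t)
    (X : ℝ → Ω → ℝ)
    (hprog : ∀ u : ℝ, 0 ≤ u →
      Measurable[(inferInstance : MeasurableSpace (Set.Icc (0:ℝ) u)).prod (F u)]
        (fun p : Set.Icc (0:ℝ) u × Ω => X (↑p.1) p.2))
    (hX : ∫⁻ ω, (∫⁻ s in Set.Ioc t₀ t, ENNReal.ofReal ((X s ω) ^ 2)) ∂P < ⊤) :
    ∃ Y : ℕ → ℝ → Ω → ℝ,
      (∀ n, ∃ (k : ℕ) (pt : ℕ → ℝ) (e : ℕ → Ω → ℝ),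
        0 < k ∧ pt 0 = t₀ ∧ pt k = t ∧ (∀ i < k, pt i < pt (i + 1)) ∧
        (∀ i < k, Measurable[F (pt i)] (e i)) ∧
        (∀ s ω, Y n s ω =
          ∑ i ∈ Finset.range k,
            Set.indicator (Set.Ico (pt i) (pt (i + 1))) (fun _ => e i ω) s)) ∧
      (∀ n, ∫⁻ ω, (∫⁻ s in Set.Ioc t₀ t, ENNReal.ofReal ((Y n s ω) ^ 2)) ∂P < ⊤) ∧
      Tendsto
        (fun n => ∫⁻ ω,
          (∫⁻ s in Set.Ioc t₀ t, ENNReal.ofReal ((X s ω - Y n s ω) ^ 2)) ∂P)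
        atTop (𝓝 0) := by
  have happrox : IsApproxByAdaptedSteps P F t₀ t X :=
    IsProgressiveNonneg.isApproxByAdaptedSteps hprog ht₀ htt (sqErr_zero_right ▸ hX).ne
  choose Y hY hY_fin hY_err using fun n : ℕ =>
    happrox _ (ENNReal.inv_pos.2 (ENNReal.natCast_ne_top n))
  refine ⟨Y, hY, fun n => sqErr_zero_right ▸ hY_fin n, ?_⟩
  exact tendsto_of_tendsto_of_tendsto_of_le_of_le tendsto_const_nhds
    ENNReal.tendsto_inv_nat_nhds_zero (fun _ => zero_le) fun n => (hY_err n).le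
end
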